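/- arXiv:2409.04433 — 8 statements merged into one kernel-verified Lean document; each statement's English description precedes it below -/
import Mathlib

section
/- Let H be a Hermitian operator on a finite-dimensional Hilbert space that decomposes as H = R + Σ_{e} w_e H_e, where R ⪰ 0, each w_e ≥ 0, and each H_e is Hermitian. Let C be a set of constraint operators and let μ*_e = min{Tr[H_e ρ] : ρ a density matrix with Tr[C ρ] = 0 for all C} be the constrained local optimum for H_e, and μ* the constrained optimum of H. If ρ is a density matrix satisfying all constraints such that Tr[R ρ] = 0 and Tr[H_e ρ] ≤ α μ*_e for all e (where α ≥ 1), then Tr[H ρ] ≤ α μ*. -/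
/-!
At an optimal feasible state `σ` the decomposition gives `∑ w_e μ*_e ≤ Tr[H σ] = μ*`, because
`Tr[R σ] ≥ 0` and each `Tr[H_e σ] ≥ μ*_e`. At `ρ` the remainder vanishes, so the local bounds give
`Tr[H ρ] ≤ α ∑ w_e μ*_e ≤ α μ*`.
-/

open Matrix ComplexOrder

/-- A density matrix satisfying all constraints `Tr[C l ρ] = 0`. -/
def FeasibleState {N L : Type*} [Fintype N] [DecidableEq N]
    (C : L → Matrix N N ℂ) (ρ : Matrix N N ℂ) : Prop :=
  ρ.PosSemidef ∧ ρ.trace = 1 ∧ ∀ l, (C l * ρ).trace = 0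

open scoped MatrixOrder in
theorem Matrix.PosSemidef.trace_mul_nonneg {n 𝕜 : Type*} [Fintype n] [DecidableEq n] [RCLike 𝕜]
    {A B : Matrix n n 𝕜} (hA : A.PosSemidef) (hB : B.PosSemidef) : 0 ≤ (A * B).trace := by
  set S := CFC.sqrt B
  have hS : S.IsHermitian := (CFC.sqrt_nonneg B).posSemidef.isHermitian
  have hSAS : (S * A * S).PosSemidef := by
    simpa only [hS.eq] using hA.mul_mul_conjTranspose_same S
  calc 0 ≤ (S * A * S).trace := hSAS.trace_nonneg
    _ = (A * B).trace := by
      rw [trace_mul_cycle, CFC.sqrt_mul_sqrt_self B hB.nonneg, trace_mul_comm]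

theorem Matrix.re_trace_add_sum_smul_mul {n ι : Type*} [Fintype n] [Fintype ι]
    (R ρ : Matrix n n ℂ) (M : ι → Matrix n n ℂ) (w : ι → ℝ) :
    ((R + ∑ i, (w i : ℂ) • M i) * ρ).trace.re =
      (R * ρ).trace.re + ∑ i, w i * (M i * ρ).trace.re := by
  simp only [add_mul, Finset.sum_mul, smul_mul_assoc, trace_add, trace_sum, trace_smul,
    Complex.add_re, Complex.re_sum, smul_eq_mul, Complex.re_ofReal_mul]

theorem Matrix.sum_mul_le_re_trace_add_sum_smul_mul {n ι : Type*} [Fintype n] [DecidableEq n]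
    [Fintype ι] {R σ : Matrix n n ℂ} {M : ι → Matrix n n ℂ} {w μ : ι → ℝ}
    (hR : R.PosSemidef) (hσ : σ.PosSemidef) (hw : ∀ i, 0 ≤ w i)
    (hμ : ∀ i, μ i ≤ (M i * σ).trace.re) :
    ∑ i, w i * μ i ≤ ((R + ∑ i, (w i : ℂ) • M i) * σ).trace.re := by
  have hRσ : 0 ≤ (R * σ).trace.re := (Complex.nonneg_iff.mp (hR.trace_mul_nonneg hσ)).1
  rw [re_trace_add_sum_smul_mul]
  have : ∑ i, w i * μ i ≤ ∑ i, w i * (M i * σ).trace.re :=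
    Finset.sum_le_sum fun i _ ↦ mul_le_mul_of_nonneg_left (hμ i) (hw i)
  linarith

theorem local_ratio_general {N E L : Type*} [Fintype N] [DecidableEq N] [Fintype E]
    (H R : Matrix N N ℂ) (He : E → Matrix N N ℂ) (w : E → ℝ)
    (C : L → Matrix N N ℂ)
    (hR : R.PosSemidef) (hw : ∀ e, 0 ≤ w e)
    (hdecomp : H = R + ∑ e, (w e : ℂ) • He e)
    (μe : E → ℝ) (μstar : ℝ)
    (hμe : ∀ e, IsLeast {x : ℝ | ∃ ρ, FeasibleState C ρ ∧ ((He e * ρ).trace).re = x} (μe e))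
    (hμstar : IsLeast {x : ℝ | ∃ ρ, FeasibleState C ρ ∧ ((H * ρ).trace).re = x} μstar)
    (α : ℝ) (hα : 1 ≤ α)
    (ρ : Matrix N N ℂ)
    (hRρ : (R * ρ).trace = 0)
    (hloc : ∀ e, ((He e * ρ).trace).re ≤ α * μe e) :
    ((H * ρ).trace).re ≤ α * μstar := by
  obtain ⟨σ, hσ, rfl⟩ := hμstar.1
  have hlower : ∑ e, w e * μe e ≤ (H * σ).trace.re := hdecomp ▸
    sum_mul_le_re_trace_add_sum_smul_mul hR hσ.1 hw fun e ↦ (hμe e).2 ⟨σ, hσ, rfl⟩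
  have hupper : (H * ρ).trace.re ≤ α * ∑ e, w e * μe e := by
    rw [hdecomp, re_trace_add_sum_smul_mul, hRρ, Complex.zero_re, zero_add, Finset.mul_sum]
    refine Finset.sum_le_sum fun e _ ↦ ?_
    rw [mul_left_comm]
    exact mul_le_mul_of_nonneg_left (hloc e) (hw e)
  exact hupper.trans (mul_le_mul_of_nonneg_left hlower (zero_le_one.trans hα))

/-- Quantum local ratio theorem. -/
theorem local_ratio {N E L : Type*} [Fintype N] [DecidableEq N] [Fintype E]
    (H R : Matrix N N ℂ) (He : E → Matrix N N ℂ) (w : E → ℝ)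
    (C : L → Matrix N N ℂ)
    (hH : H.IsHermitian) (hHe : ∀ e, (He e).IsHermitian)
    (hR : R.PosSemidef) (hw : ∀ e, 0 ≤ w e)
    (hdecomp : H = R + ∑ e, (w e : ℂ) • He e)
    (μe : E → ℝ) (μstar : ℝ)
    (hμe : ∀ e, IsLeast {x : ℝ | ∃ ρ, FeasibleState C ρ ∧ ((He e * ρ).trace).re = x} (μe e))
    (hμstar : IsLeast {x : ℝ | ∃ ρ, FeasibleState C ρ ∧ ((H * ρ).trace).re = x} μstar)
    (α : ℝ) (hα : 1 ≤ α)
    (ρ : Matrix N N ℂ) (hρ : FeasibleState C ρ)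
    (hRρ : (R * ρ).trace = 0)
    (hloc : ∀ e, ((He e * ρ).trace).re ≤ α * μe e) :
    ((H * ρ).trace).re ≤ α * μstar :=
  local_ratio_general H R He w C hR hw hdecomp μe μstar hμe hμstar α hα ρ hRρ hloc
end

section
/- For the classical weighted Vertex Cover problem, the local ratio algorithm (repeatedly picking an uncovered edge ij, subtracting ε_{ij} = min{c_i, c_j} from both endpoint costs, and selecting all zero-cost vertices) outputs a vertex cover whose total cost is at most 2 times the cost of a minimum-weight vertex cover. -/
open Finset

/-- Local ratio 2-approximation for weighted Vertex Cover: if the cost function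
decomposes as `c v = r v + ∑ edges e containing v, ε e` with `ε, r ≥ 0` (the
decomposition produced by the local ratio algorithm, `ε e = 0` for non-selected
edges), and the output set `S` consists of vertices of zero residual cost and is
a vertex cover, then its cost is at most twice the cost of any vertex cover
(in particular, of a minimum-weight one). -/
theorem vertex_cover_local_ratio {V : Type*} [Fintype V] [DecidableEq V]
    (G : SimpleGraph V) [DecidableRel G.Adj]
    (c r : V → ℝ) (ε : Sym2 V → ℝ)
    (hc : ∀ v, 0 ≤ c v) (hr : ∀ v, 0 ≤ r v) (hε : ∀ e, 0 ≤ ε e)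
    (hdecomp : ∀ v, c v = r v + ∑ e ∈ G.edgeFinset, (if v ∈ e then ε e else 0))
    (S : Finset V)
    (hS0 : ∀ v ∈ S, r v = 0)
    (hScover : ∀ e ∈ G.edgeSet, ∃ v ∈ S, v ∈ e)
    (T : Finset V)
    (hTcover : ∀ e ∈ G.edgeSet, ∃ v ∈ T, v ∈ e) :
    ∑ v ∈ S, c v ≤ 2 * ∑ v ∈ T, c v := by
  have hcard : ∀ (A : Finset V) (e : Sym2 V),
      ∑ v ∈ A, (if v ∈ e then ε e else 0) = ((A.filter (· ∈ e)).card : ℝ) * ε e := by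
    intro A e
    rw [← Finset.sum_filter, Finset.sum_const, nsmul_eq_mul]
  have upper : ∑ v ∈ S, c v ≤ ∑ e ∈ G.edgeFinset, 2 * ε e := by
    calc ∑ v ∈ S, c v
        = ∑ v ∈ S, ∑ e ∈ G.edgeFinset, (if v ∈ e then ε e else 0) := by
          refine Finset.sum_congr rfl fun v hv => ?_
          rw [hdecomp v, hS0 v hv, zero_add]
      _ = ∑ e ∈ G.edgeFinset, ∑ v ∈ S, (if v ∈ e then ε e else 0) := Finset.sum_comm
      _ ≤ ∑ e ∈ G.edgeFinset, 2 * ε e := by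
          refine Finset.sum_le_sum fun e _ => ?_
          rw [hcard]
          refine mul_le_mul_of_nonneg_right ?_ (hε e)
          have : (S.filter (· ∈ e)).card ≤ 2 := by
            induction e using Sym2.ind with
            | _ a b =>
              calc (S.filter (· ∈ s(a, b))).card
                  ≤ ({a, b} : Finset V).card := by
                    refine Finset.card_le_card fun v hv => ?_
                    have := (Finset.mem_filter.mp hv).2
                    simp only [Sym2.mem_iff] at this
                    simpa using this
                _ ≤ 2 := Finset.card_insert_le _ _ |>.trans (by simp)
          exact_mod_cast this
  have lower : ∑ e ∈ G.edgeFinset, ε e ≤ ∑ v ∈ T, c v := by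
    calc ∑ e ∈ G.edgeFinset, ε e
        ≤ ∑ e ∈ G.edgeFinset, ∑ v ∈ T, (if v ∈ e then ε e else 0) := by
          refine Finset.sum_le_sum fun e he => ?_
          rw [hcard]
          have he' : e ∈ G.edgeSet := SimpleGraph.mem_edgeFinset.mp he
          obtain ⟨v, hvT, hve⟩ := hTcover e he'
          have hpos : 1 ≤ (T.filter (· ∈ e)).card :=
            Finset.card_pos.mpr ⟨v, Finset.mem_filter.mpr ⟨hvT, hve⟩⟩
          have : (1 : ℝ) ≤ ((T.filter (· ∈ e)).card : ℝ) := by exact_mod_cast hpos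
          nlinarith [hε e]
      _ = ∑ v ∈ T, ∑ e ∈ G.edgeFinset, (if v ∈ e then ε e else 0) := Finset.sum_comm
      _ ≤ ∑ v ∈ T, c v := by
          refine Finset.sum_le_sum fun v _ => ?_
          rw [hdecomp v]
          linarith [hr v]
  calc ∑ v ∈ S, c v ≤ ∑ e ∈ G.edgeFinset, 2 * ε e := upper
    _ = 2 * ∑ e ∈ G.edgeFinset, ε e := by rw [Finset.mul_sum]
    _ ≤ 2 * ∑ v ∈ T, c v := by linarith
end

section
/- Let x* be any feasible solution to the Vertex Cover LP relaxation (x_i ∈ [0,1], x_i + x_j ≥ 1 for all edges ij), and let c(x) = r(x) + Σ_{ij∈E} ε_{ij}(x_i + x_j) be a decomposition with ε_{ij} ≥ 0 and r a linear function with nonnegative coefficients. If x̂ ∈ {0,1}^V satisfies r(x̂) = 0, then c(x̂) ≤ 2 c(x*). -/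
open Finset

lemma sum_pair_mem {V : Type*} [Fintype V] [DecidableEq V] (i j : V) (hij : i ≠ j)
    (f : V → ℝ) : ∑ v, (if v ∈ s(i,j) then f v else 0) = f i + f j := by
  rw [← Finset.sum_filter]
  have : Finset.filter (· ∈ s(i,j)) Finset.univ = {i, j} := by
    ext v; simp [Sym2.mem_iff]
  rw [this, Finset.sum_pair hij]

/-- Local ratio bound against the Vertex Cover LP relaxation: if `x*` is feasible
for the LP (`0 ≤ x* ≤ 1`, `x*_i + x*_j ≥ 1` on edges), the cost `c` decomposes as
`c_i = r_i + ∑_{e ∋ i} ε_e` with `ε ≥ 0` and `r` having nonnegative coefficients,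
and `x̂ ∈ {0,1}^V` satisfies `r(x̂) = 0`, then `c(x̂) ≤ 2 c(x*)`. -/
theorem vertex_cover_LP_local_ratio {V : Type*} [Fintype V] [DecidableEq V]
    (G : SimpleGraph V) [DecidableRel G.Adj]
    (c r : V → ℝ) (ε : Sym2 V → ℝ)
    (hc : ∀ v, 0 ≤ c v) (hr : ∀ v, 0 ≤ r v) (hε : ∀ e, 0 ≤ ε e)
    (hdecomp : ∀ v, c v = r v + ∑ e ∈ G.edgeFinset, (if v ∈ e then ε e else 0))
    (xstar : V → ℝ)
    (hx0 : ∀ v, 0 ≤ xstar v) (hx1 : ∀ v, xstar v ≤ 1)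
    (hxfeas : ∀ i j, G.Adj i j → 1 ≤ xstar i + xstar j)
    (xhat : V → ℝ) (hxhat : ∀ v, xhat v = 0 ∨ xhat v = 1)
    (hrhat : ∑ v, r v * xhat v = 0) :
    ∑ v, c v * xhat v ≤ 2 * ∑ v, c v * xstar v := by
  classical
  have pair : ∀ e ∈ G.edgeFinset, ∃ i j, i ≠ j ∧ e = s(i,j) ∧ G.Adj i j := by
    intro e he
    induction e using Sym2.ind with
    | _ i j =>
      rw [SimpleGraph.mem_edgeFinset, SimpleGraph.mem_edgeSet] at he
      exact ⟨i, j, he.ne, rfl, he⟩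
  have expand : ∀ y : V → ℝ, ∑ v, c v * y v
      = ∑ v, r v * y v + ∑ e ∈ G.edgeFinset, ∑ v, (if v ∈ e then ε e * y v else 0) := by
    intro y
    simp_rw [hdecomp, add_mul, Finset.sum_add_distrib, Finset.sum_mul, ite_mul, zero_mul]
    rw [Finset.sum_comm]
  rw [expand xhat, expand xstar, hrhat, zero_add]
  have h1 : ∑ e ∈ G.edgeFinset, ∑ v, (if v ∈ e then ε e * xhat v else 0)
      ≤ ∑ e ∈ G.edgeFinset, 2 * ∑ v, (if v ∈ e then ε e * xstar v else 0) := by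
    apply Finset.sum_le_sum
    intro e he
    obtain ⟨i, j, hij, rfl, hadj⟩ := pair e he
    rw [sum_pair_mem i j hij, sum_pair_mem i j hij]
    have h2 : xhat i + xhat j ≤ 2 := by
      rcases hxhat i with h | h <;> rcases hxhat j with h' | h' <;> simp [h, h'] <;> norm_num
    have h3 := hxfeas i j hadj
    nlinarith [hε (s(i,j))]
  have h4 : 0 ≤ ∑ v, r v * xstar v :=
    Finset.sum_nonneg fun v _ => mul_nonneg (hr v) (hx0 v)
  calc ∑ e ∈ G.edgeFinset, ∑ v, (if v ∈ e then ε e * xhat v else 0)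
      ≤ ∑ e ∈ G.edgeFinset, 2 * ∑ v, (if v ∈ e then ε e * xstar v else 0) := h1
    _ = 2 * ∑ e ∈ G.edgeFinset, ∑ v, (if v ∈ e then ε e * xstar v else 0) := by
        rw [Finset.mul_sum]
    _ ≤ 2 * (∑ v, r v * xstar v
        + ∑ e ∈ G.edgeFinset, ∑ v, (if v ∈ e then ε e * xstar v else 0)) := by linarith
end

section
/- (Transfer matrix lemma) Let γ be a tensor on n qubits (a state in (ℂ²)^{⊗n}), and let φ, θ be 2-index tensors (matrices on ℂ² ⊗ ℂ²’s two factors) satisfying the contraction constraints Σ_{α₁,α₂} φ_{α₁α₂} γ_{α₁α₂α₃...α_n} = 0 for all α₃,...,α_n, and Σ_{α₂,α₃} θ_{α₂α₃} γ_{α₁α₂α₃...} = 0 for all α₁,α₄,...,α_n. Define ω_{α₁α₃} = Σ_{β,γ'} φ_{α₁β} ε_{βγ'} θ_{γ'α₃}, where ε is the antisymmetric tensor ε_{01} = 1, ε_{10} = -1, ε_{00} = ε_{11} = 0. Then Σ_{α₁,α₃} ω_{α₁α₃} γ_{α₁α₂α₃...} = 0 for all α₂, α₄,...,α_n. -/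
open Finset

/-- The contraction constraint: contracting the 2-index tensor `φ` against the
indices `i, j` of `γ` gives zero for every setting of the remaining indices. -/
def ContractionConstraint {n : ℕ} (φ : Fin 2 → Fin 2 → ℂ) (i j : Fin n)
    (γ : (Fin n → Fin 2) → ℂ) : Prop :=
  ∀ x : Fin n → Fin 2,
    ∑ a : Fin 2, ∑ b : Fin 2, φ a b * γ (Function.update (Function.update x i a) j b) = 0

/-- The antisymmetric (singlet) tensor `ε`. -/
def epsTensor : Fin 2 → Fin 2 → ℂ := fun a b =>
  if a = 0 ∧ b = 1 then 1 else if a = 1 ∧ b = 0 then -1 else 0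

/-- Bravyi's transfer matrix lemma: constraints `φ` on qubits `(i,j)` and `θ` on
`(j,k)` imply the constraint `ω = φ ε θ` on `(i,k)`. -/
theorem transfer_matrix_lemma {n : ℕ} (γ : (Fin n → Fin 2) → ℂ)
    (i j k : Fin n) (hij : i ≠ j) (hjk : j ≠ k) (hik : i ≠ k)
    (φ θ : Fin 2 → Fin 2 → ℂ)
    (hφ : ContractionConstraint φ i j γ)
    (hθ : ContractionConstraint θ j k γ) :
    ContractionConstraint
      (fun a c => ∑ b : Fin 2, ∑ b' : Fin 2, φ a b * epsTensor b b' * θ b' c) i k γ := by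
  intro x
  set g : Fin 2 → Fin 2 → Fin 2 → ℂ := fun a b c =>
    γ (Function.update (Function.update (Function.update x i a) j b) k c) with hg
  have Hφ : ∀ c : Fin 2, ∑ a : Fin 2, ∑ b : Fin 2, φ a b * g a b c = 0 := by
    intro c
    have h := hφ (Function.update x k c)
    have heq : ∀ a b : Fin 2,
        Function.update (Function.update (Function.update x k c) i a) j b
          = Function.update (Function.update (Function.update x i a) j b) k c := by
      intro a b
      rw [Function.update_comm hik.symm, Function.update_comm hjk.symm]
    simpa [heq] using h
  have Hθ : ∀ a : Fin 2, ∑ b : Fin 2, ∑ c : Fin 2, θ b c * g a b c = 0 := fun a => hθ _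
  have hgoal : ∀ a c : Fin 2,
      γ (Function.update (Function.update x i a) k c) = g a (x j) c := by
    intro a c
    have : Function.update (Function.update x i a) j (x j)
        = Function.update x i a := by
      nth_rewrite 1 [show x j = (Function.update x i a) j from
        (Function.update_of_ne hij.symm a x).symm]
      exact Function.update_eq_self j _
    rw [hg]
    simp only [this]
  have H0 := Hφ 0; have H1 := Hφ 1
  have T0 := Hθ 0; have T1 := Hθ 1
  simp only [Fin.sum_univ_two] at H0 H1 T0 T1 ⊢
  simp only [hgoal, epsTensor]
  norm_num
  have h2 : x j = 0 ∨ x j = 1 := by omega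
  rcases h2 with h | h <;> rw [h]
  · linear_combination (θ 1 0) * H0 + (θ 1 1) * H1 - (φ 0 1) * T0 - (φ 1 1) * T1
  · linear_combination (φ 0 0) * T0 + (φ 1 0) * T1 - (θ 0 0) * H0 - (θ 0 1) * H1
end

section
/- Let γ be a state on n qubits, ψ = diag entries α|00⟩⟨·| + β|11⟩⟨·| tensor with αβ ≠ 0, and ε the singlet tensor. If γ satisfies the ψ-contraction constraint on index pairs (i,j) and (j,k) (for distinct i, j, k), then γ satisfies the ε-contraction constraint on (i,k). Similarly, ε on (i,j) and ψ on (j,k) yield ψ on (i,k); and ε on (i,j) and ε on (j,k) yield ε on (i,k). -/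
open Finset

/-- The tensor `ψ` with `ψ₀₀ = α`, `ψ₁₁ = β`, other entries zero. -/
def psiTensor (α β : ℂ) : Fin 2 → Fin 2 → ℂ := fun a b =>
  if a = 0 ∧ b = 0 then α else if a = 1 ∧ b = 1 then β else 0

/-- Deriving new constraints along paths: `ψ` on `(i,j)` and `ψ` on `(j,k)` give
`ε` on `(i,k)`; `ε` and `ψ` give `ψ`; `ε` and `ε` give `ε`. -/
theorem derived_constraints {n : ℕ} (γ : (Fin n → Fin 2) → ℂ)
    (α β : ℂ) (hαβ : α * β ≠ 0)
    (i j k : Fin n) (hij : i ≠ j) (hjk : j ≠ k) (hik : i ≠ k) :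
    (ContractionConstraint (psiTensor α β) i j γ →
      ContractionConstraint (psiTensor α β) j k γ →
      ContractionConstraint epsTensor i k γ) ∧
    (ContractionConstraint epsTensor i j γ →
      ContractionConstraint (psiTensor α β) j k γ →
      ContractionConstraint (psiTensor α β) i k γ) ∧
    (ContractionConstraint epsTensor i j γ →
      ContractionConstraint epsTensor j k γ →
      ContractionConstraint epsTensor i k γ) := by
  have hα : α ≠ 0 := left_ne_zero_of_mul hαβ
  have hβ : β ≠ 0 := right_ne_zero_of_mul hαβ
  set U : (Fin n → Fin 2) → Fin 2 → Fin 2 → Fin 2 → (Fin n → Fin 2) :=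
    fun x a b c => Function.update (Function.update (Function.update x i a) j b) k c with hU
  have comm3 : ∀ (x : Fin n → Fin 2) (a b c : Fin 2),
      Function.update (Function.update (Function.update x k c) i a) j b = U x a b c := by
    intro x a b c
    rw [Function.update_comm hik.symm, Function.update_comm hjk.symm]
  have base : ∀ (x : Fin n → Fin 2) (a c : Fin 2),
      Function.update (Function.update x i a) k c = U x a (x j) c := by
    intro x a c
    have h : x j = (Function.update x i a) j := (Function.update_of_ne hij.symm _ _).symm
    show _ = Function.update (Function.update (Function.update x i a) j (x j)) k c
    rw [h, Function.update_eq_self]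
  refine ⟨?_, ?_, ?_⟩
  · intro h1 h2
    simp only [ContractionConstraint, psiTensor, Fin.sum_univ_two] at h1 h2
    simp at h1 h2
    simp only [ContractionConstraint, epsTensor, Fin.sum_univ_two]
    simp
    intro x
    rw [base x 0 1, base x 1 0]
    have hj : x j = 0 ∨ x j = 1 := by omega
    rcases hj with hj | hj <;> rw [hj]
    · have A := h1 (Function.update x k 1)
      rw [comm3, comm3] at A
      have B : α * γ (U x 1 0 0) + β * γ (U x 1 1 1) = 0 := h2 (Function.update x i 1)
      have hc : α * γ (U x 0 0 1) = α * γ (U x 1 0 0) := by linear_combination A - B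
      linear_combination mul_left_cancel₀ hα hc
    · have A := h1 (Function.update x k 0)
      rw [comm3, comm3] at A
      have B : α * γ (U x 0 0 0) + β * γ (U x 0 1 1) = 0 := h2 (Function.update x i 0)
      have hc : β * γ (U x 0 1 1) = β * γ (U x 1 1 0) := by linear_combination B - A
      linear_combination mul_left_cancel₀ hβ hc
  · intro h1 h2
    simp only [ContractionConstraint, psiTensor, epsTensor, Fin.sum_univ_two] at h1 h2
    simp at h1 h2
    simp only [ContractionConstraint, psiTensor, Fin.sum_univ_two]
    simp
    intro x
    rw [base x 0 0, base x 1 1]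
    have hj : x j = 0 ∨ x j = 1 := by omega
    rcases hj with hj | hj <;> rw [hj]
    · have A := h1 (Function.update x k 1)
      rw [comm3, comm3] at A
      have B : α * γ (U x 0 0 0) + β * γ (U x 0 1 1) = 0 := h2 (Function.update x i 0)
      linear_combination B - β * A
    · have A := h1 (Function.update x k 0)
      rw [comm3, comm3] at A
      have B : α * γ (U x 1 0 0) + β * γ (U x 1 1 1) = 0 := h2 (Function.update x i 1)
      linear_combination B + α * A
  · intro h1 h2
    simp only [ContractionConstraint, epsTensor, Fin.sum_univ_two] at h1 h2
    simp at h1 h2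
    simp only [ContractionConstraint, epsTensor, Fin.sum_univ_two]
    simp
    intro x
    rw [base x 0 1, base x 1 0]
    have hj : x j = 0 ∨ x j = 1 := by omega
    rcases hj with hj | hj <;> rw [hj]
    · have A := h1 (Function.update x k 0)
      rw [comm3, comm3] at A
      have B : γ (U x 0 0 1) + -γ (U x 0 1 0) = 0 := h2 (Function.update x i 0)
      linear_combination A + B
    · have A := h1 (Function.update x k 1)
      rw [comm3, comm3] at A
      have B : γ (U x 1 0 1) + -γ (U x 1 1 0) = 0 := h2 (Function.update x i 1)
      linear_combination A + B
end

section
/- For -1 ≤ 2k ≤ 0 and α ∈ [max(-1, 2k), min(0, 2k+1)], the smallest eigenvalue of the 3×3 real symmetric matrix M(α,k) = [[1+α-k, 0, -√(1-α²)/2], [0, 1+k-α, -√(1-(2k-α)²)/2], [-√(1-α²)/2, -√(1-(2k-α)²)/2, 1-k]] equals (1/2)(-√(2α² - 4αk + k² + 2) - k + 2), and over α this minimum value is minimized (as a function of α with k fixed) at α = 0 or α = 2k, where it equals (1/2)(-√(k²+2) - k + 2). -/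
set_option maxHeartbeats 2000000

open Matrix

private lemma tvc_aux_norm_pos (v : Fin 3 → ℝ) (hv : v ≠ 0) :
    0 < v 0 ^ 2 + v 1 ^ 2 + v 2 ^ 2 := by
  rcases Function.ne_iff.mp hv with ⟨i, hi⟩
  simp only [Pi.zero_apply] at hi
  fin_cases i
  · nlinarith [sq_pos_of_ne_zero (show v 0 ≠ 0 from hi), sq_nonneg (v 1), sq_nonneg (v 2)]
  · nlinarith [sq_pos_of_ne_zero (show v 1 ≠ 0 from hi), sq_nonneg (v 0), sq_nonneg (v 2)]
  · nlinarith [sq_pos_of_ne_zero (show v 2 ≠ 0 from hi), sq_nonneg (v 0), sq_nonneg (v 1)]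

/-- The smallest eigenvalue of the restriction of `H_{ij} = φ_i + φ_j` to the
covering subspace is `(1/2)(-√(2α²-4αk+k²+2) - k + 2)`, and as a function of `α`
(with `k` fixed) it is minimized at `α = 0` or `α = 2k`, where it equals
`(1/2)(-√(k²+2) - k + 2)`. -/
theorem tvc_local_min_eigenvalue (k α : ℝ)
    (hk1 : -1 ≤ 2 * k) (hk2 : 2 * k ≤ 0)
    (hα1 : -1 ≤ α) (hα2 : α ≤ 0)
    (hα3 : -1 ≤ 2 * k - α) (hα4 : 2 * k - α ≤ 0) :
    let M : Matrix (Fin 3) (Fin 3) ℝ :=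
      !![1 + α - k, 0, -Real.sqrt (1 - α ^ 2) / 2;
         0, 1 + k - α, -Real.sqrt (1 - (2 * k - α) ^ 2) / 2;
         -Real.sqrt (1 - α ^ 2) / 2, -Real.sqrt (1 - (2 * k - α) ^ 2) / 2, 1 - k]
    let lam : ℝ := (1 / 2) * (-Real.sqrt (2 * α ^ 2 - 4 * α * k + k ^ 2 + 2) - k + 2)
    (∃ v : Fin 3 → ℝ, v ≠ 0 ∧ M.mulVec v = lam • v) ∧
    (∀ (μ : ℝ) (v : Fin 3 → ℝ), v ≠ 0 → M.mulVec v = μ • v → lam ≤ μ) ∧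
    ((1 / 2) * (-Real.sqrt (k ^ 2 + 2) - k + 2) ≤ lam) ∧
    ((α = 0 ∨ α = 2 * k) → lam = (1 / 2) * (-Real.sqrt (k ^ 2 + 2) - k + 2)) := by
  intro M lam
  set a := Real.sqrt (1 - α ^ 2) with ha_def
  set b := Real.sqrt (1 - (2 * k - α) ^ 2) with hb_def
  set s := Real.sqrt (2 * α ^ 2 - 4 * α * k + k ^ 2 + 2) with hs_def
  have hM : M = !![1 + α - k, 0, -a / 2; 0, 1 + k - α, -b / 2;
      -a / 2, -b / 2, 1 - k] := rfl
  have hlam : lam = (1 / 2) * (-s - k + 2) := rfl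
  have h1a : (0:ℝ) ≤ 1 - α ^ 2 := by nlinarith
  have h1b : (0:ℝ) ≤ 1 - (2 * k - α) ^ 2 := by nlinarith
  have hD0 : (0:ℝ) ≤ 2 * α ^ 2 - 4 * α * k + k ^ 2 + 2 := by nlinarith
  have ha2 : a ^ 2 = 1 - α ^ 2 := Real.sq_sqrt h1a
  have hb2 : b ^ 2 = 1 - (2 * k - α) ^ 2 := Real.sq_sqrt h1b
  have hs2 : s ^ 2 = 2 * α ^ 2 - 4 * α * k + k ^ 2 + 2 := Real.sq_sqrt hD0
  have ha0 : 0 ≤ a := Real.sqrt_nonneg _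
  have hb0 : 0 ≤ b := Real.sqrt_nonneg _
  have hs0 : 0 ≤ s := Real.sqrt_nonneg _
  have hsk : k < s := by nlinarith [sq_nonneg (α - k)]
  -- key determinant identity
  have key : 4 * ((s - k) / 2) * (α + (s - k) / 2) * ((2 * k - α) + (s - k) / 2)
      = a ^ 2 * ((2 * k - α) + (s - k) / 2) + b ^ 2 * (α + (s - k) / 2) := by
    linear_combination ((s + k) / 2) * hs2 - ((2 * k - α) + (s - k) / 2) * ha2
      - (α + (s - k) / 2) * hb2
  have hd1 : 0 ≤ α + (s - k) / 2 := by nlinarith [hs2, hs0, h1a]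
  have hd2 : 0 ≤ (2 * k - α) + (s - k) / 2 := by nlinarith [hs2, hs0, h1b]
  -- degenerate case 1 : α = -1
  have hcase1 : 0 = α + (s - k) / 2 → α = -1 ∧ a = 0 ∧ s = k + 2 := by
    intro h1
    have hsv : s = k - 2 * α := by linarith
    have hsq : α ^ 2 = 1 := by
      linear_combination (1 / 2) * hs2 - ((s + k - 2 * α) / 2) * hsv
    have hαm1 : α = -1 := by
      rcases mul_eq_zero.mp (show (α + 1) * (α - 1) = 0 by linear_combination hsq)
        with h | h
      · linarith
      · linarith
    have haz : a = 0 := by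
      rw [ha_def, show 1 - α ^ 2 = 0 by rw [hαm1]; ring, Real.sqrt_zero]
    exact ⟨hαm1, haz, by rw [hαm1] at hsv; linarith⟩
  -- degenerate case 2 : 2k - α = -1
  have hcase2 : 0 = (2 * k - α) + (s - k) / 2 → α = 2 * k + 1 ∧ b = 0 ∧ s = k + 2 := by
    intro h2
    have hsv : s = 2 * α - 3 * k := by linarith
    have hsq : (2 * k - α) ^ 2 = 1 := by
      linear_combination (1 / 2) * hs2 - ((s + 2 * α - 3 * k) / 2) * hsv
    have hαv : α = 2 * k + 1 := by
      rcases mul_eq_zero.mp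
        (show ((2 * k - α) + 1) * ((2 * k - α) - 1) = 0 by linear_combination hsq)
        with h | h
      · linarith
      · linarith
    have hbz : b = 0 := by
      rw [hb_def, show 1 - (2 * k - α) ^ 2 = 0 by rw [hαv]; ring, Real.sqrt_zero]
    exact ⟨hαv, hbz, by rw [hαv] at hsv; linarith⟩
  -- the quadratic form of M - lam·I is nonnegative
  have hQ : ∀ x y z : ℝ, 0 ≤ (α + (s - k) / 2) * x ^ 2
      + ((2 * k - α) + (s - k) / 2) * y ^ 2 + ((s - k) / 2) * z ^ 2
      - a * x * z - b * y * z := by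
    intro x y z
    rcases eq_or_lt_of_le hd1 with h1 | h1
    · obtain ⟨hαm1, haz, hsv⟩ := hcase1 h1
      rw [hαm1, haz, hsv]
      have hb2' : b ^ 2 = 1 - (2 * k + 1) ^ 2 := by rw [hb2, hαm1]; ring
      have hkp : (0:ℝ) < 8 * k + 8 := by linarith
      have hcz : 0 ≤ (4 * k ^ 2 + 12 * k + 8) * z ^ 2 := by
        have : (0:ℝ) ≤ 4 * k ^ 2 + 12 * k + 8 := by nlinarith
        exact mul_nonneg this (sq_nonneg z)
      nlinarith [sq_nonneg (2 * (2 * k + 2) * y - b * z), hcz, hb2', hkp]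
    rcases eq_or_lt_of_le hd2 with h2 | h2
    · obtain ⟨hαv, hbz, hsv⟩ := hcase2 h2
      rw [hαv, hbz, hsv]
      have ha2' : a ^ 2 = 1 - (2 * k + 1) ^ 2 := by rw [ha2, hαv]
      have hkp : (0:ℝ) < 8 * k + 8 := by linarith
      have hcz : 0 ≤ (4 * k ^ 2 + 12 * k + 8) * z ^ 2 := by
        have : (0:ℝ) ≤ 4 * k ^ 2 + 12 * k + 8 := by nlinarith
        exact mul_nonneg this (sq_nonneg z)
      nlinarith [sq_nonneg (2 * (2 * k + 2) * x - a * z), hcz, ha2', hkp]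
    · have hid : (4 * (α + (s - k) / 2) * ((2 * k - α) + (s - k) / 2))
          * ((α + (s - k) / 2) * x ^ 2 + ((2 * k - α) + (s - k) / 2) * y ^ 2
            + ((s - k) / 2) * z ^ 2 - a * x * z - b * y * z)
          = ((2 * k - α) + (s - k) / 2) * (2 * (α + (s - k) / 2) * x - a * z) ^ 2
            + (α + (s - k) / 2) * (2 * ((2 * k - α) + (s - k) / 2) * y - b * z) ^ 2 := by
        linear_combination (z ^ 2) * key
      have hr : 0 ≤ (4 * (α + (s - k) / 2) * ((2 * k - α) + (s - k) / 2))
          * ((α + (s - k) / 2) * x ^ 2 + ((2 * k - α) + (s - k) / 2) * y ^ 2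
            + ((s - k) / 2) * z ^ 2 - a * x * z - b * y * z) := by
        rw [hid]
        have := mul_nonneg h2.le (sq_nonneg (2 * (α + (s - k) / 2) * x - a * z))
        have := mul_nonneg h1.le (sq_nonneg (2 * ((2 * k - α) + (s - k) / 2) * y - b * z))
        linarith
      have hp : 0 < 4 * (α + (s - k) / 2) * ((2 * k - α) + (s - k) / 2) := by
        have := mul_pos h1 h2; linarith
      exact nonneg_of_mul_nonneg_right hr hp
  refine ⟨?_, ?_, ?_, ?_⟩
  · -- existence of an eigenvector
    rcases eq_or_lt_of_le hd1 with h1 | h1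
    · obtain ⟨hαm1, haz, hsv⟩ := hcase1 h1
      refine ⟨![1, 0, 0], ?_, ?_⟩
      · intro h
        have := congrFun h 0
        simp at this
      · rw [hM, hlam]
        funext i
        fin_cases i <;>
          simp [Matrix.mulVec, dotProduct, Fin.sum_univ_three, haz] <;>
          linarith
    rcases eq_or_lt_of_le hd2 with h2 | h2
    · obtain ⟨hαv, hbz, hsv⟩ := hcase2 h2
      refine ⟨![0, 1, 0], ?_, ?_⟩
      · intro h
        have := congrFun h 1
        simp at this
      · rw [hM, hlam]
        funext i
        fin_cases i <;>
          simp [Matrix.mulVec, dotProduct, Fin.sum_univ_three, hbz] <;>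
          linarith
    · refine ⟨![a * ((2 * k - α) + (s - k) / 2), b * (α + (s - k) / 2),
        2 * (α + (s - k) / 2) * ((2 * k - α) + (s - k) / 2)], ?_, ?_⟩
      · intro h
        have h3 := congrFun h 2
        simp at h3
        rcases h3 with h3 | h3 <;> nlinarith
      · rw [hM, hlam]
        funext i
        fin_cases i <;>
          simp [Matrix.mulVec, dotProduct, Fin.sum_univ_three]
        · ring
        · ring
        · linear_combination (1 / 2) * key
  · -- lam is a lower bound for every eigenvalue
    intro μ v hv hMv
    rw [hM] at hMv
    have h0 := congrFun hMv 0
    have h1 := congrFun hMv 1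
    have h2 := congrFun hMv 2
    simp [Matrix.mulVec, dotProduct, Fin.sum_univ_three] at h0 h1 h2
    have hsum : (1 + α - k) * v 0 ^ 2 + (1 + k - α) * v 1 ^ 2 + (1 - k) * v 2 ^ 2
        - a * v 0 * v 2 - b * v 1 * v 2 = μ * (v 0 ^ 2 + v 1 ^ 2 + v 2 ^ 2) := by
      linear_combination v 0 * h0 + v 1 * h1 + v 2 * h2
    have hnorm := tvc_aux_norm_pos v hv
    have hQ' := hQ (v 0) (v 1) (v 2)
    rw [hlam]
    nlinarith [hsum, hnorm, hQ']
  · -- lower bound by value at endpoints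
    rw [hlam]
    have hle : 2 * α ^ 2 - 4 * α * k + k ^ 2 + 2 ≤ k ^ 2 + 2 := by
      nlinarith [mul_nonneg (neg_nonneg.2 hα2) (neg_nonneg.2 hα4)]
    have := Real.sqrt_le_sqrt hle
    rw [← hs_def] at this
    linarith
  · rintro (rfl | rfl) <;> rw [hlam, hs_def] <;> norm_num <;> ring_nf
end

section
/- For k ∈ [-1, 0], the function f(k) = 2(1-k)/(2 - k - √(k²+2)) attains its maximum over [-1,0] at k = 0, with maximum value 2 + √2. -/
/-- The local ratio `f(k) = 2(1-k)/(2 - k - √(k²+2))` attains its maximum over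
`k ∈ [-1, 0]` at `k = 0`, where it equals `2 + √2`. -/
theorem tvc_ratio_max (k : ℝ) (hk1 : -1 ≤ k) (hk2 : k ≤ 0) :
    2 * (1 - k) / (2 - k - Real.sqrt (k ^ 2 + 2)) ≤
      2 * (1 - (0 : ℝ)) / (2 - 0 - Real.sqrt ((0 : ℝ) ^ 2 + 2)) ∧
    2 * (1 - (0 : ℝ)) / (2 - 0 - Real.sqrt ((0 : ℝ) ^ 2 + 2)) = 2 + Real.sqrt 2 := by
  have h02 : ((0:ℝ) ^ 2 + 2) = 2 := by norm_num
  set s := Real.sqrt (k ^ 2 + 2) with hs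
  set t := Real.sqrt 2 with ht
  have hs2 : s ^ 2 = k ^ 2 + 2 := Real.sq_sqrt (by positivity)
  have hsnn : 0 ≤ s := Real.sqrt_nonneg _
  have ht2 : t ^ 2 = 2 := Real.sq_sqrt (by norm_num)
  have htnn : 0 ≤ t := Real.sqrt_nonneg _
  have ht15 : t < 3/2 := by nlinarith
  have hden : 0 < 2 - k - s := by nlinarith
  have hden0 : 0 < 2 - (0:ℝ) - t := by nlinarith
  constructor
  · rw [h02, ← ht]
    rw [div_le_div_iff₀ hden (by linarith)]
    -- reduce to s ≤ √2 + (1-√2)k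
    have hbr : 0 ≤ (t - 1) * k + (2 - t) := by nlinarith
    have hprod : 0 ≤ (-2 * k) * ((t - 1) * k + (2 - t)) :=
      mul_nonneg (by linarith) hbr
    have hR : 0 < t + (1 - t) * k := by nlinarith
    have hsle : s ≤ t + (1 - t) * k := by nlinarith [sq_nonneg (s - (t + (1 - t) * k))]
    nlinarith
  · rw [h02, ← ht, div_eq_iff (by linarith)]
    nlinarith
end

section
/- Let γ ∈ (ℂ²)^{⊗n} have amplitudes depending only on Hamming weight, so γ = Σ_a γ_a |a⟩ with |a⟩ the Dicke states. Suppose for every pair (i,j) the ψ-contraction constraint holds with ψ_{00} = α, ψ_{11} = β, αβ ≠ 0. Then γ_a = (-α/β) γ_{a-2} for all a ≥ 2, and consequently γ lies in a 2-dimensional subspace spanned by one even-weight and one odd-weight vector. -/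
open Finset

/-- Non-bipartite case of the Entangled Vertex Cover analysis: if the amplitudes
of `γ` depend only on the Hamming weight (via `g`) and the `ψ`-contraction
constraint (`ψ₀₀ = α`, `ψ₁₁ = β`, `αβ ≠ 0`) holds on every pair of qubits, then
`g a = (-α/β) g (a-2)` for `2 ≤ a ≤ n`; consequently `γ` lies in a 2-dimensional
subspace spanned by one even-weight and one odd-weight vector. -/
theorem evc_nonbipartite_two_dimensional {n : ℕ} (hn : 2 ≤ n)
    (γ : (Fin n → Fin 2) → ℂ) (g : ℕ → ℂ)
    (hg : ∀ x : Fin n → Fin 2, γ x = g (∑ i, (x i : ℕ)))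
    (α β : ℂ) (hαβ : α * β ≠ 0)
    (hconstr : ∀ i j : Fin n, i ≠ j → ∀ x : Fin n → Fin 2,
      α * γ (Function.update (Function.update x i 0) j 0) +
        β * γ (Function.update (Function.update x i 1) j 1) = 0) :
    (∀ a : ℕ, 2 ≤ a → a ≤ n → g a = (-α / β) * g (a - 2)) ∧
    (∃ ce co : ℂ, ∀ x : Fin n → Fin 2,
      γ x = (if Even (∑ i, (x i : ℕ)) then ce else co) *
        (-α / β) ^ ((∑ i, (x i : ℕ)) / 2)) := by
  have hβ : β ≠ 0 := fun h => hαβ (by simp [h])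
  -- sums of indicator functions
  have hsum : ∀ c a : ℕ, a ≤ n →
      (∑ k : Fin n, (if c ≤ (k : ℕ) ∧ (k : ℕ) < a then (1 : Fin 2) else 0).val)
        = a - c := by
    intro c a ha
    have : ∀ k : Fin n,
        (if c ≤ (k : ℕ) ∧ (k : ℕ) < a then (1 : Fin 2) else 0).val
          = if c ≤ (k : ℕ) ∧ (k : ℕ) < a then 1 else 0 := by
      intro k; split <;> simp
    simp only [this]
    rw [Fin.sum_univ_eq_sum_range (fun m => if c ≤ m ∧ m < a then 1 else 0) n]
    have hf : (Finset.range n).filter (fun m => c ≤ m ∧ m < a) = Finset.Ico c a := by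
      ext m; simp [Finset.mem_range, Finset.mem_Ico]; omega
    rw [Finset.sum_ite, Finset.sum_const, Finset.sum_const, hf, Nat.card_Ico]
    simp
  -- the recurrence
  have key : ∀ a : ℕ, 2 ≤ a → a ≤ n → g a = (-α / β) * g (a - 2) := by
    intro a ha2 han
    set i : Fin n := ⟨0, by omega⟩
    set j : Fin n := ⟨1, by omega⟩
    have hij : i ≠ j := by simp [i, j, Fin.ext_iff]
    set x : Fin n → Fin 2 := fun k => if 0 ≤ (k : ℕ) ∧ (k : ℕ) < a then 1 else 0 with hx
    have hc := hconstr i j hij x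
    have h0 : Function.update (Function.update x i 0) j 0
        = fun (k : Fin n) => if 2 ≤ (k : ℕ) ∧ (k : ℕ) < a then (1 : Fin 2) else 0 := by
      funext k
      rcases eq_or_ne k j with rfl | hkj
      · simp [Function.update, j]
      · rcases eq_or_ne k i with rfl | hki
        · simp [Function.update, hij.symm, i, j, Fin.ext_iff, ha2]
        · have h1 : (k : ℕ) ≠ 0 := fun h => hki (Fin.ext h)
          have h2 : (k : ℕ) ≠ 1 := fun h => hkj (Fin.ext h)
          simp only [Function.update, dif_neg hkj, dif_neg hki, hx]
          rcases lt_or_ge (k : ℕ) a with h | h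
          · rw [if_pos (by omega), if_pos (by omega)]
          · rw [if_neg (by omega), if_neg (by omega)]
    have hxi : x i = 1 := by
      simp only [hx, i]
      rw [if_pos]; exact ⟨Nat.zero_le _, by omega⟩
    have hxj : x j = 1 := by
      simp only [hx, j]
      rw [if_pos]; exact ⟨Nat.zero_le _, by omega⟩
    have e1 : Function.update x i 1 = x := by rw [← hxi]; exact Function.update_eq_self i x
    have h1 : Function.update (Function.update x i 1) j 1 = x := by
      rw [e1, ← hxj]; exact Function.update_eq_self j x
    rw [h0, h1, hg, hg] at hc
    rw [hsum 2 a han, hsum 0 a han] at hc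
    simp only [Nat.sub_zero] at hc
    field_simp
    linear_combination hc
  refine ⟨key, g 0, g 1, ?_⟩
  have main : ∀ a : ℕ, a ≤ n →
      g a = (if Even a then g 0 else g 1) * (-α / β) ^ (a / 2) := by
    intro a
    induction a using Nat.strong_induction_on with
    | _ a ih =>
      intro han
      match a with
      | 0 => simp
      | 1 => simp
      | (a + 2) =>
        have h2 : g (a + 2) = (-α / β) * g a := by
          have := key (a + 2) (by omega) han
          simpa using this
        rw [h2, ih a (by omega) (by omega)]
        have hpar : Even (a + 2) ↔ Even a := by simp [Nat.even_add]
        have hdiv : (a + 2) / 2 = a / 2 + 1 := by omega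
        rw [hdiv]
        simp only [hpar]
        ring
  intro x
  have hle : (∑ i, ((x i : ℕ))) ≤ n := by
    calc (∑ i, ((x i : ℕ))) ≤ ∑ _i : Fin n, 1 := by
          apply Finset.sum_le_sum; intro k _; omega
      _ = n := by simp
  rw [hg x, main _ hle]
end
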